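/- arXiv:2403.13964 — 2 statements merged into one kernel-verified Lean document; each statement's English description precedes it below -/
import Mathlib

section
/- Let H be a real Hilbert space and x, y ∈ H with x ≠ 0. Then the infimum of D(x, y|P), taken over all orthogonal projections P onto closed subspaces of H, equals |⟨x, y⟩|; in particular it is attained by the rank-one projection P_x onto the span of x, for which D(x, y|P_x) = |⟨x, y⟩|. -/
/-!
The cross terms of `⟪Px + (x - Px), Py + (y - Py)⟫` vanish by orthogonality, so
`⟪x, y⟫ = ⟪Px, Py⟫ + ⟪x - Px, y - Py⟫`, and Cauchy–Schwarz on both terms gives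
`|⟪x, y⟫| ≤ D(x, y | P)`. For `P` the projection onto `span x` we have `x - Px = 0` and `Py`
parallel to `x`, so Cauchy–Schwarz is an equality.
-/

open scoped InnerProductSpace RealInnerProductSpace

namespace Submodule

variable {𝕜 E : Type*} [RCLike 𝕜] [NormedAddCommGroup E] [InnerProductSpace 𝕜 E]

/-- The quantity `D(x, y | P)` for `P` the orthogonal projection onto `V`. -/
noncomputable def projD (V : Submodule 𝕜 E) [V.HasOrthogonalProjection] (x y : E) : ℝ :=
  ‖V.starProjection x‖ * ‖V.starProjection y‖
    + ‖x - V.starProjection x‖ * ‖y - V.starProjection y‖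

variable (V : Submodule 𝕜 E) [V.HasOrthogonalProjection]

theorem inner_eq_inner_starProjection_add_inner_sub_starProjection (x y : E) :
    ⟪x, y⟫_𝕜 = ⟪V.starProjection x, V.starProjection y⟫_𝕜
      + ⟪x - V.starProjection x, y - V.starProjection y⟫_𝕜 := by
  have hx : ⟪x - V.starProjection x, V.starProjection y⟫_𝕜 = 0 :=
    inner_left_of_mem_orthogonal (V.starProjection_apply_mem y)
      (V.sub_starProjection_mem_orthogonal x)
  have hy : ⟪V.starProjection x, y - V.starProjection y⟫_𝕜 = 0 :=
    inner_right_of_mem_orthogonal (V.starProjection_apply_mem x)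
      (V.sub_starProjection_mem_orthogonal y)
  conv_lhs =>
    rw [← add_sub_cancel (V.starProjection x) x, ← add_sub_cancel (V.starProjection y) y]
  rw [inner_add_left, inner_add_right, inner_add_right, hx, hy, add_zero, zero_add]

theorem norm_inner_le_projD (x y : E) : ‖⟪x, y⟫_𝕜‖ ≤ V.projD x y := by
  rw [V.inner_eq_inner_starProjection_add_inner_sub_starProjection]
  exact (norm_add_le _ _).trans (add_le_add (norm_inner_le_norm _ _) (norm_inner_le_norm _ _))

theorem projD_span_singleton_self (x y : E) : (𝕜 ∙ x).projD x y = ‖⟪x, y⟫_𝕜‖ := by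
  rw [projD, starProjection_eq_self_iff.mpr (mem_span_singleton_self x), starProjection_singleton,
    sub_self, norm_zero, zero_mul, add_zero, norm_smul, norm_div, RCLike.norm_ofReal, abs_pow,
    abs_norm]
  rcases eq_or_ne x 0 with rfl | hx
  · simp
  · field_simp [norm_ne_zero_iff.mpr hx]

end Submodule

theorem inf_D_eq_abs_inner_general {H : Type*} [NormedAddCommGroup H]
    [InnerProductSpace ℝ H] (x y : H) :
    IsLeast {d : ℝ | ∃ (V : Submodule ℝ H) (_ : Submodule.HasOrthogonalProjection V),
        d = ‖(Submodule.orthogonalProjectionOnto V x : H)‖ * ‖(Submodule.orthogonalProjectionOnto V y : H)‖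
          + ‖x - (Submodule.orthogonalProjectionOnto V x : H)‖ * ‖y - (Submodule.orthogonalProjectionOnto V y : H)‖}
      |⟪x, y⟫| ∧
    ‖(Submodule.orthogonalProjectionOnto (ℝ ∙ x) x : H)‖ * ‖(Submodule.orthogonalProjectionOnto (ℝ ∙ x) y : H)‖
      + ‖x - (Submodule.orthogonalProjectionOnto (ℝ ∙ x) x : H)‖ * ‖y - (Submodule.orthogonalProjectionOnto (ℝ ∙ x) y : H)‖
      = |⟪x, y⟫| := by
  have hattained : (ℝ ∙ x).projD x y = |⟪x, y⟫| := by
    rw [Submodule.projD_span_singleton_self, Real.norm_eq_abs]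
  refine ⟨⟨⟨ℝ ∙ x, inferInstance, hattained.symm⟩, ?_⟩, hattained⟩
  rintro d ⟨V, _, rfl⟩
  rw [← Real.norm_eq_abs]
  exact V.norm_inner_le_projD x y

/-- For a real Hilbert space `H` and `x, y ∈ H` with `x ≠ 0`, the infimum of
`D(x,y|P) = ‖Px‖ ‖Py‖ + ‖x - Px‖ ‖y - Py‖` over all orthogonal projections `P`
onto closed subspaces equals `|⟨x, y⟩|`; it is attained by the rank-one
projection onto the span of `x`. -/
theorem inf_D_eq_abs_inner {H : Type*} [NormedAddCommGroup H]
    [InnerProductSpace ℝ H] [CompleteSpace H] (x y : H) (hx : x ≠ 0) :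
    IsLeast {d : ℝ | ∃ (V : Submodule ℝ H) (_ : Submodule.HasOrthogonalProjection V),
        d = ‖(Submodule.orthogonalProjectionOnto V x : H)‖ * ‖(Submodule.orthogonalProjectionOnto V y : H)‖
          + ‖x - (Submodule.orthogonalProjectionOnto V x : H)‖ * ‖y - (Submodule.orthogonalProjectionOnto V y : H)‖}
      |⟪x, y⟫| ∧
    ‖(Submodule.orthogonalProjectionOnto (ℝ ∙ x) x : H)‖ * ‖(Submodule.orthogonalProjectionOnto (ℝ ∙ x) y : H)‖
      + ‖x - (Submodule.orthogonalProjectionOnto (ℝ ∙ x) x : H)‖ * ‖y - (Submodule.orthogonalProjectionOnto (ℝ ∙ x) y : H)‖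
      = |⟪x, y⟫| :=
  inf_D_eq_abs_inner_general x y
end

section
/- Let f, g ∈ L²(ℝ^d, dx) be square-integrable probability density functions with ∫ f·g dx > 0, and let P be the orthogonal projection of L²(ℝ^d) onto a closed subspace. Then the Cauchy–Schwarz P-divergence 𝓓iv(f, g|P) := −log( (∫ f(x)g(x) dx) / D(f, g|P) ) satisfies 𝓓iv(f, g|I) − 𝓓iv(f, g|P) = −log( D(f, g|P) / (‖f‖·‖g‖) ) ≥ 0, and hence 𝓓iv(f, g|I) ≥ 𝓓iv(f, g|P) ≥ 0; moreover 𝓓iv(f, f|P) = 0. -/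
open MeasureTheory
open scoped RealInnerProductSpace

abbrev L2Euclidean (d : ℕ) : Type :=
  Lp ℝ 2 (volume : Measure (EuclideanSpace ℝ (Fin d)))

/-! Since `x - Px` and `y - Py` are orthogonal to `V`, `⟪x, y⟫ = ⟪Px, Py⟫ + ⟪x - Px, y - Py⟫`.
Cauchy–Schwarz on each term gives `⟪x, y⟫ ≤ D(x, y|P)`, and Cauchy–Schwarz
in `ℝ²` for the vectors `(‖Px‖, ‖x - Px‖)` and `(‖Py‖, ‖y - Py‖)`, whose lengths are `‖x‖` and
`‖y‖` by Pythagoras, gives `D(x, y|P) ≤ ‖x‖ ‖y‖`. So `0 < ⟪f, g⟫ ≤ D(f, g|P) ≤ ‖f‖ ‖g‖`, and every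
claim follows from `log (a / c) = log (a / b) + log (b / c)` and `log ≤ 0` on `(0, 1]`. -/

theorem mul_add_mul_le_mul_of_sq_eq {a b c e F G : ℝ} (hF : 0 ≤ F) (hG : 0 ≤ G)
    (hF2 : F ^ 2 = a ^ 2 + b ^ 2) (hG2 : G ^ 2 = c ^ 2 + e ^ 2) :
    a * c + b * e ≤ F * G := by
  refine (abs_le_of_sq_le_sq' ?_ (mul_nonneg hF hG)).2
  rw [mul_pow, hF2, hG2]
  nlinarith [sq_nonneg (a * e - b * c)]

theorem neg_log_div_nonneg {a b : ℝ} (ha : 0 ≤ a) (hab : a ≤ b) : 0 ≤ -Real.log (a / b) :=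
  have hb : 0 ≤ b := ha.trans hab
  neg_nonneg.2 <| Real.log_nonpos (div_nonneg ha hb) (div_le_one_of_le₀ hab hb)

namespace Submodule

variable {E : Type*} [NormedAddCommGroup E] [InnerProductSpace ℝ E]
  (K : Submodule ℝ E) [K.HasOrthogonalProjection]

/-- The quantity `D(x, y|P)` for the orthogonal projection `P` onto `K`. -/
noncomputable def cauchySchwarzBound (x y : E) : ℝ :=
  ‖K.starProjection x‖ * ‖K.starProjection y‖ + ‖x - K.starProjection x‖ * ‖y - K.starProjection y‖

theorem real_inner_eq_inner_starProjection_add_inner_sub (x y : E) :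
    ⟪x, y⟫ = ⟪K.starProjection x, K.starProjection y⟫
      + ⟪x - K.starProjection x, y - K.starProjection y⟫ := by
  have hx := starProjection_inner_eq_zero x _ (K.starProjection_apply_mem y)
  have hy := starProjection_inner_eq_zero y _ (K.starProjection_apply_mem x)
  rw [real_inner_comm] at hy
  simp only [inner_sub_left, inner_sub_right] at hx hy ⊢
  linarith

theorem norm_sq_eq_norm_sq_starProjection_add_norm_sq_sub (x : E) :
    ‖x‖ ^ 2 = ‖K.starProjection x‖ ^ 2 + ‖x - K.starProjection x‖ ^ 2 := by
  simpa only [real_inner_self_eq_norm_sq] using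
    K.real_inner_eq_inner_starProjection_add_inner_sub x x

theorem real_inner_le_cauchySchwarzBound (x y : E) : ⟪x, y⟫ ≤ K.cauchySchwarzBound x y := by
  rw [K.real_inner_eq_inner_starProjection_add_inner_sub x y]
  exact add_le_add (real_inner_le_norm _ _) (real_inner_le_norm _ _)

theorem cauchySchwarzBound_le_norm_mul_norm (x y : E) :
    K.cauchySchwarzBound x y ≤ ‖x‖ * ‖y‖ :=
  mul_add_mul_le_mul_of_sq_eq (norm_nonneg x) (norm_nonneg y)
    (K.norm_sq_eq_norm_sq_starProjection_add_norm_sq_sub x)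
    (K.norm_sq_eq_norm_sq_starProjection_add_norm_sq_sub y)

theorem cauchySchwarzBound_self (x : E) : K.cauchySchwarzBound x x = ⟪x, x⟫ := by
  rw [cauchySchwarzBound, real_inner_self_eq_norm_sq,
    K.norm_sq_eq_norm_sq_starProjection_add_norm_sq_sub x]
  ring

end Submodule

theorem cauchy_schwarz_P_divergence_general {d : ℕ} (f g : L2Euclidean d)
    (hfg : 0 < ⟪f, g⟫)
    (V : Submodule ℝ (L2Euclidean d)) [V.HasOrthogonalProjection]
    (Dfg Dff DivP DivI DivPff : ℝ)
    (hDfg : Dfg = ‖(V.orthogonalProjectionOnto f : L2Euclidean d)‖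
          * ‖(V.orthogonalProjectionOnto g : L2Euclidean d)‖
        + ‖f - (V.orthogonalProjectionOnto f : L2Euclidean d)‖
          * ‖g - (V.orthogonalProjectionOnto g : L2Euclidean d)‖)
    (hDff : Dff = ‖(V.orthogonalProjectionOnto f : L2Euclidean d)‖
          * ‖(V.orthogonalProjectionOnto f : L2Euclidean d)‖
        + ‖f - (V.orthogonalProjectionOnto f : L2Euclidean d)‖
          * ‖f - (V.orthogonalProjectionOnto f : L2Euclidean d)‖)
    (hDivP : DivP = -Real.log (⟪f, g⟫ / Dfg))
    (hDivI : DivI = -Real.log (⟪f, g⟫ / (‖f‖ * ‖g‖)))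
    (hDivPff : DivPff = -Real.log (⟪f, f⟫ / Dff)) :
    DivI - DivP = -Real.log (Dfg / (‖f‖ * ‖g‖)) ∧
    0 ≤ -Real.log (Dfg / (‖f‖ * ‖g‖)) ∧
    DivP ≤ DivI ∧ 0 ≤ DivP ∧ DivPff = 0 := by
  have hDfg_eq : Dfg = V.cauchySchwarzBound f g := hDfg
  have hDff_eq : Dff = ⟪f, f⟫ := hDff.trans (V.cauchySchwarzBound_self f)
  have hle : ⟪f, g⟫ ≤ Dfg := hDfg_eq ▸ V.real_inner_le_cauchySchwarzBound f g
  have hDfg_le : Dfg ≤ ‖f‖ * ‖g‖ := hDfg_eq ▸ V.cauchySchwarzBound_le_norm_mul_norm f g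
  have hDfg_pos : 0 < Dfg := hfg.trans_le hle
  have hnorm_pos : 0 < ‖f‖ * ‖g‖ := hDfg_pos.trans_le hDfg_le
  have hdiff : DivI - DivP = -Real.log (Dfg / (‖f‖ * ‖g‖)) := by
    rw [hDivI, hDivP, Real.log_div hfg.ne' hnorm_pos.ne', Real.log_div hfg.ne' hDfg_pos.ne',
      Real.log_div hDfg_pos.ne' hnorm_pos.ne']
    ring
  have hdiff_nonneg := neg_log_div_nonneg hDfg_pos.le hDfg_le
  refine ⟨hdiff, hdiff_nonneg, by linarith, hDivP ▸ neg_log_div_nonneg hfg.le hle, ?_⟩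
  rw [hDivPff, hDff_eq, Real.log_div_self, neg_zero]

/-- **Cauchy–Schwarz P-divergence.** Let `f, g ∈ L²(ℝ^d)` be square-integrable
probability densities with `∫ f g > 0`, and `P` the orthogonal projection onto a
closed subspace `V` of `L²(ℝ^d)`. With `D(f,g|P) = ‖Pf‖ ‖Pg‖ + ‖f − Pf‖ ‖g − Pg‖`
and `𝓓iv(f,g|P) = −log(⟨f,g⟩ / D(f,g|P))`, one has
`𝓓iv(f,g|I) − 𝓓iv(f,g|P) = −log(D(f,g|P)/(‖f‖ ‖g‖)) ≥ 0`, hence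
`𝓓iv(f,g|I) ≥ 𝓓iv(f,g|P) ≥ 0`; moreover `𝓓iv(f,f|P) = 0`. -/
theorem cauchy_schwarz_P_divergence {d : ℕ} (f g : L2Euclidean d)
    (hf_nonneg : 0 ≤ᵐ[volume] ⇑f) (hf_one : ∫ a, f a = 1)
    (hg_nonneg : 0 ≤ᵐ[volume] ⇑g) (hg_one : ∫ a, g a = 1)
    (hfg : 0 < ⟪f, g⟫)
    (V : Submodule ℝ (L2Euclidean d)) [V.HasOrthogonalProjection]
    (Dfg Dff DivP DivI DivPff : ℝ)
    (hDfg : Dfg = ‖(V.orthogonalProjectionOnto f : L2Euclidean d)‖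
          * ‖(V.orthogonalProjectionOnto g : L2Euclidean d)‖
        + ‖f - (V.orthogonalProjectionOnto f : L2Euclidean d)‖
          * ‖g - (V.orthogonalProjectionOnto g : L2Euclidean d)‖)
    (hDff : Dff = ‖(V.orthogonalProjectionOnto f : L2Euclidean d)‖
          * ‖(V.orthogonalProjectionOnto f : L2Euclidean d)‖
        + ‖f - (V.orthogonalProjectionOnto f : L2Euclidean d)‖
          * ‖f - (V.orthogonalProjectionOnto f : L2Euclidean d)‖)
    (hDivP : DivP = -Real.log (⟪f, g⟫ / Dfg))
    (hDivI : DivI = -Real.log (⟪f, g⟫ / (‖f‖ * ‖g‖)))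
    (hDivPff : DivPff = -Real.log (⟪f, f⟫ / Dff)) :
    DivI - DivP = -Real.log (Dfg / (‖f‖ * ‖g‖)) ∧
    0 ≤ -Real.log (Dfg / (‖f‖ * ‖g‖)) ∧
    DivP ≤ DivI ∧ 0 ≤ DivP ∧ DivPff = 0 :=
  cauchy_schwarz_P_divergence_general f g hfg V Dfg Dff DivP DivI DivPff hDfg hDff hDivP hDivI
    hDivPff
end
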